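/- For every n ∈ ℕ, letting a(2n) be the number of sequences w : Fin (2n) → ℤ with every entry in {-1, 1}, all partial sums nonnegative, and total sum 0, one has a(2n) · n! · (n+1)! = (2n)!. -/

import Mathlib

/-! Reading `1` as an up step `U` and `-1` as a down step `D`, the partial sum of a prefix is
its number of `U`s minus its number of `D`s, so the admissible sequences of length `2n` are
exactly the Dyck words of semilength `n`. These are counted by the Catalan number
`C n = (2n)! / (n! (n+1)!)`. -/

/-- The number of sequences `w : Fin n → ℤ` with every entry in `{-1, 1}`,
all partial sums `Σ_{j<i} w j` (for `i ≤ n`) nonnegative, and total sum `0`. -/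
noncomputable def goodCount (n : ℕ) : ℕ :=
  Nat.card {w : Fin n → ℤ //
    (∀ i, w i = -1 ∨ w i = 1) ∧
    (∀ i : ℕ, i ≤ n → 0 ≤ ∑ j ∈ Finset.univ.filter (fun j : Fin n => (j : ℕ) < i), w j) ∧
    (∑ j, w j) = 0}

open List

namespace DyckStep

def toInt : DyckStep → ℤ
  | U => 1
  | D => -1

def ofInt (x : ℤ) : DyckStep := if x = 1 then U else D

lemma ofInt_toInt (s : DyckStep) : ofInt s.toInt = s := by
  cases s <;> rfl

lemma toInt_ofInt {x : ℤ} (hx : x = -1 ∨ x = 1) : (ofInt x).toInt = x := by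
  rcases hx with rfl | rfl <;> rfl

lemma toInt_eq_neg_one_or_one (s : DyckStep) : s.toInt = -1 ∨ s.toInt = 1 := by
  cases s
  exacts [Or.inr rfl, Or.inl rfl]

lemma sum_map_toInt (l : List DyckStep) : (l.map toInt).sum = l.count U - l.count D := by
  induction l with
  | nil => simp
  | cons s l ih => cases s <;> simp [toInt, ih] <;> ring

end DyckStep

open DyckStep

def signEquivDyckStep (m : ℕ) :
    {w : Fin m → ℤ // ∀ i, w i = -1 ∨ w i = 1} ≃ (Fin m → DyckStep) where
  toFun w := ofInt ∘ w.1
  invFun v := ⟨toInt ∘ v, fun i => toInt_eq_neg_one_or_one (v i)⟩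
  left_inv w := Subtype.ext (funext fun i => toInt_ofInt (w.2 i))
  right_inv v := funext fun i => ofInt_toInt (v i)

lemma map_toInt_ofFn_ofInt {m : ℕ} {w : Fin m → ℤ} (hw : ∀ i, w i = -1 ∨ w i = 1) :
    (ofFn (ofInt ∘ w)).map toInt = ofFn w := by
  rw [map_ofFn]
  exact congrArg ofFn (funext fun i => toInt_ofInt (hw i))

def IsDyckList (l : List DyckStep) : Prop :=
  l.count U = l.count D ∧ ∀ i, (l.take i).count D ≤ (l.take i).count U

lemma isDyckList_iff (l : List DyckStep) :
    IsDyckList l ↔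
      (∀ i ≤ l.length, 0 ≤ ((l.map toInt).take i).sum) ∧ (l.map toInt).sum = 0 := by
  simp only [IsDyckList, ← map_take, sum_map_toInt, sub_nonneg, sub_eq_zero, Nat.cast_le,
    Nat.cast_inj]
  refine ⟨fun ⟨hl, hle⟩ => ⟨fun i _ => hle i, hl⟩, fun ⟨hle, hl⟩ => ⟨hl, fun i => ?_⟩⟩
  rw [take_eq_take_min]
  exact hle _ (min_le_right _ _)

lemma isDyckList_ofFn_ofInt_iff {m : ℕ} {w : Fin m → ℤ} (hw : ∀ i, w i = -1 ∨ w i = 1) :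
    IsDyckList (ofFn (ofInt ∘ w)) ↔
      (∀ i ≤ m, 0 ≤ ∑ j ∈ Finset.univ.filter (fun j : Fin m => (j : ℕ) < i), w j) ∧
        ∑ j, w j = 0 := by
  rw [isDyckList_iff, map_toInt_ofFn_ofInt hw, length_ofFn, sum_ofFn]
  simp only [sum_take_ofFn]

lemma ofFn_getElem_of_length_eq {α : Type*} {m : ℕ} (l : List α) (h : l.length = m) :
    ofFn (fun i : Fin m => l[i.1]'(h ▸ i.2)) = l :=
  ext_getElem (by simp [h]) (by simp)

lemma DyckWord.length_toList_of_semilength_eq {p : DyckWord} {n : ℕ} (hp : p.semilength = n) :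
    p.toList.length = 2 * n := by
  rw [← p.two_mul_semilength_eq_length, hp]

def dyckWordEquiv (n : ℕ) :
    {v : Fin (2 * n) → DyckStep // IsDyckList (ofFn v)} ≃ {p : DyckWord // p.semilength = n} where
  toFun v := ⟨⟨ofFn v.1, v.2.1, v.2.2⟩, by
    have := DyckWord.two_mul_semilength_eq_length (p := ⟨ofFn v.1, v.2.1, v.2.2⟩)
    simp only [length_ofFn] at this
    omega⟩
  invFun p := ⟨fun i => p.1.toList[i.1]'
      (by rw [DyckWord.length_toList_of_semilength_eq p.2]; exact i.2), by
    rw [ofFn_getElem_of_length_eq _ (DyckWord.length_toList_of_semilength_eq p.2)]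
    exact ⟨p.1.count_U_eq_count_D, p.1.count_D_le_count_U⟩⟩
  left_inv v := by ext; simp
  right_inv p := Subtype.ext <| DyckWord.ext <|
    ofFn_getElem_of_length_eq _ (DyckWord.length_toList_of_semilength_eq p.2)

theorem goodCount_two_mul (n : ℕ) : goodCount (2 * n) = catalan n := by
  rw [goodCount, ← DyckWord.card_dyckWord_semilength_eq_catalan, ← Nat.card_eq_fintype_card]
  exact Nat.card_congr <|
    (Equiv.subtypeSubtypeEquivSubtypeInter _ _).symm.trans <|
      (Equiv.subtypeEquiv (signEquivDyckStep _) fun w =>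
        (isDyckList_ofFn_ofInt_iff w.2).symm).trans (dyckWordEquiv n)

theorem catalan_mul_factorial_mul_factorial_succ (n : ℕ) :
    catalan n * n.factorial * (n + 1).factorial = (2 * n).factorial := by
  have h := Nat.choose_mul_factorial_mul_factorial (Nat.le_mul_of_pos_left n two_pos)
  rw [two_mul n, Nat.add_sub_cancel, ← two_mul, ← Nat.centralBinom_eq_two_mul_choose,
    ← succ_mul_catalan_eq_centralBinom] at h
  rw [← h, Nat.factorial_succ]
  ring

theorem stmt3 (n : ℕ) :
    goodCount (2 * n) * Nat.factorial n * Nat.factorial (n + 1) =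
      Nat.factorial (2 * n) := by
  rw [goodCount_two_mul, catalan_mul_factorial_mul_factorial_succ]
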